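/- arXiv:2411.02898 — 2 statements merged into one kernel-verified Lean document; each statement's English description precedes it below -/
import Mathlib

section
/- Let a ≠ b be real numbers and define f_{a,b}(p) = (p e^a + (1−p) e^b) / e^{p a + (1−p) b} for p ∈ [0,1]. Then p₀ := 1/(1 − e^{−(b−a)}) − 1/(b−a) lies in [0,1], and max_{0 ≤ p ≤ 1} f_{a,b}(p) = f_{a,b}(p₀) = ((e^{b−a} − 1)/(b−a)) / exp(b − a + 1 − (b−a)/(1 − e^{−(b−a)})). -/
/-!
Put `x = b - a`, `c = e^x - 1` and `q = 1 - p`. Dividing numerator and denominator by `e^a`,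
`f(p) = (1 + q c) e^{-q x}`. With `q₀ = 1/x - 1/c` one has `1 + q c = (c/x) (1 + (q - q₀) x)`,
and `c/x > 0`, so `1 + t ≤ e^t` at `t = (q - q₀) x` gives `f ≤ (c/x) e^{-q₀ x}`, with equality
at `q = q₀`, i.e. at `p = 1 - q₀ = p₀`. The bounds `0 ≤ q₀ ≤ 1` are again `1 + t ≤ e^t`,
at `t = x` and `t = -x`.
-/

open Real

noncomputable def expRatio (a b p : ℝ) : ℝ :=
  (p * exp a + (1 - p) * exp b) / exp (p * a + (1 - p) * b)

lemma expRatio_eq (a b p : ℝ) :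
    expRatio a b p = (1 + (1 - p) * (exp (b - a) - 1)) * exp (-((1 - p) * (b - a))) := by
  have hb : exp b = exp a * exp (b - a) := by rw [← exp_add, add_sub_cancel]
  have hden : exp (p * a + (1 - p) * b) = exp a * exp ((1 - p) * (b - a)) := by
    rw [← exp_add]; ring_nf
  rw [expRatio, hb, hden, exp_neg]
  field_simp
  ring

section CriticalPoint

variable {c x : ℝ}

lemma one_add_mul_mul_exp_neg_le (hcx : 0 < c / x) (q : ℝ) :
    (1 + q * c) * exp (-(q * x)) ≤ c / x * exp (x / c - 1) := by
  have hx : x ≠ 0 := by rintro rfl; simp at hcx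
  have hc : c ≠ 0 := by rintro rfl; simp at hcx
  set t := (q - (1 / x - 1 / c)) * x
  have hlin : 1 + q * c = c / x * (1 + t) := by simp only [t]; field_simp; ring
  calc (1 + q * c) * exp (-(q * x))
      = c / x * ((1 + t) * exp (-(q * x))) := by rw [hlin]; ring
    _ ≤ c / x * (exp t * exp (-(q * x))) := by
        gcongr
        linarith [add_one_le_exp t]
    _ = c / x * exp (x / c - 1) := by
        rw [← exp_add]; congr 2; simp only [t]; field_simp; ring

lemma one_add_mul_mul_exp_neg_critical (hc : c ≠ 0) (hx : x ≠ 0) :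
    (1 + (1 / x - 1 / c) * c) * exp (-((1 / x - 1 / c) * x)) = c / x * exp (x / c - 1) := by
  congr 2 <;> field_simp <;> ring

end CriticalPoint

section ExpSubOne

variable {x : ℝ}

lemma exp_sub_one_ne_zero (hx : x ≠ 0) : exp x - 1 ≠ 0 :=
  sub_ne_zero.mpr (mt (exp_eq_one_iff x).mp hx)

lemma mul_exp_sub_one_pos (hx : x ≠ 0) : 0 < x * (exp x - 1) := by
  rcases hx.lt_or_gt with hneg | hpos
  · exact mul_pos_of_neg_of_neg hneg (by linarith [exp_lt_one_iff.mpr hneg])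
  · exact mul_pos hpos (by linarith [one_lt_exp_iff.mpr hpos])

lemma exp_sub_one_div_pos (hx : x ≠ 0) : 0 < (exp x - 1) / x := by
  have h := mul_exp_sub_one_pos hx
  rw [mul_pos_iff] at h
  rw [div_pos_iff]
  tauto

lemma one_div_sub_one_div_exp_sub_one (hx : x ≠ 0) :
    1 / x - 1 / (exp x - 1) = (exp x - 1 - x) / (x * (exp x - 1)) := by
  rw [div_sub_div _ _ hx (exp_sub_one_ne_zero hx), one_mul, mul_one]

lemma one_div_sub_one_div_exp_sub_one_nonneg (hx : x ≠ 0) : 0 ≤ 1 / x - 1 / (exp x - 1) := by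
  rw [one_div_sub_one_div_exp_sub_one hx]
  exact div_nonneg (by linarith [add_one_le_exp x]) (mul_exp_sub_one_pos hx).le

lemma one_div_sub_one_div_exp_sub_one_le_one (hx : x ≠ 0) : 1 / x - 1 / (exp x - 1) ≤ 1 := by
  rw [one_div_sub_one_div_exp_sub_one hx, div_le_one (mul_exp_sub_one_pos hx)]
  have h := mul_le_mul_of_nonneg_left (one_sub_le_exp_neg x) (exp_pos x).le
  rw [← exp_add, add_neg_cancel, exp_zero] at h
  linarith

lemma one_div_one_sub_exp_neg (hx : x ≠ 0) : 1 / (1 - exp (-x)) = 1 + 1 / (exp x - 1) := by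
  have := exp_sub_one_ne_zero hx
  rw [exp_neg]
  field_simp
  ring

end ExpSubOne

section ExpRatio

variable {a b : ℝ}

lemma expRatio_le (hab : a ≠ b) (p : ℝ) :
    expRatio a b p ≤
      (exp (b - a) - 1) / (b - a) * exp ((b - a) / (exp (b - a) - 1) - 1) := by
  rw [expRatio_eq]
  exact one_add_mul_mul_exp_neg_le (exp_sub_one_div_pos (sub_ne_zero.mpr hab.symm)) _

lemma expRatio_critical (hab : a ≠ b) :
    expRatio a b (1 - (1 / (b - a) - 1 / (exp (b - a) - 1))) =
      (exp (b - a) - 1) / (b - a) * exp ((b - a) / (exp (b - a) - 1) - 1) := by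
  have hx : b - a ≠ 0 := sub_ne_zero.mpr hab.symm
  rw [expRatio_eq, sub_sub_cancel]
  exact one_add_mul_mul_exp_neg_critical (exp_sub_one_ne_zero hx) hx

end ExpRatio

/-- For `a ≠ b` and `f(p) = (p e^a + (1-p) e^b) / e^{pa + (1-p)b}` on `[0,1]`,
the point `p₀ = 1/(1 - e^{-(b-a)}) - 1/(b-a)` lies in `[0,1]`, `f` attains its maximum over
`[0,1]` at `p₀`, and
`f(p₀) = ((e^{b-a} - 1)/(b-a)) / exp(b - a + 1 - (b-a)/(1 - e^{-(b-a)}))`. -/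
theorem max_exponential_ratio (a b : ℝ) (hab : a ≠ b) :
    (1 / (1 - Real.exp (-(b - a))) - 1 / (b - a)) ∈ Set.Icc (0 : ℝ) 1 ∧
    (∀ p ∈ Set.Icc (0 : ℝ) 1,
      (p * Real.exp a + (1 - p) * Real.exp b) / Real.exp (p * a + (1 - p) * b) ≤
        ((1 / (1 - Real.exp (-(b - a))) - 1 / (b - a)) * Real.exp a +
            (1 - (1 / (1 - Real.exp (-(b - a))) - 1 / (b - a))) * Real.exp b) /
          Real.exp ((1 / (1 - Real.exp (-(b - a))) - 1 / (b - a)) * a +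
            (1 - (1 / (1 - Real.exp (-(b - a))) - 1 / (b - a))) * b)) ∧
    ((1 / (1 - Real.exp (-(b - a))) - 1 / (b - a)) * Real.exp a +
        (1 - (1 / (1 - Real.exp (-(b - a))) - 1 / (b - a))) * Real.exp b) /
      Real.exp ((1 / (1 - Real.exp (-(b - a))) - 1 / (b - a)) * a +
        (1 - (1 / (1 - Real.exp (-(b - a))) - 1 / (b - a))) * b) =
      ((Real.exp (b - a) - 1) / (b - a)) /
        Real.exp (b - a + 1 - (b - a) / (1 - Real.exp (-(b - a)))) := by
  have hx : b - a ≠ 0 := sub_ne_zero.mpr hab.symm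
  have hp₀ : 1 / (1 - exp (-(b - a))) - 1 / (b - a) =
      1 - (1 / (b - a) - 1 / (exp (b - a) - 1)) := by
    rw [one_div_one_sub_exp_neg hx]; ring
  rw [hp₀]
  refine ⟨⟨?_, ?_⟩, fun p _ => (expRatio_le hab p).trans_eq (expRatio_critical hab).symm,
    (expRatio_critical hab).trans ?_⟩
  · linarith [one_div_sub_one_div_exp_sub_one_le_one hx]
  · linarith [one_div_sub_one_div_exp_sub_one_nonneg hx]
  · rw [div_eq_mul_one_div (b - a) (1 - _), one_div_one_sub_exp_neg hx, div_eq_mul_inv _ (exp _),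
      ← exp_neg]
    congr 2
    ring
end

section
/- Let p(n) = α log n / n with α > 0 a constant, and suppose α b_l < 1 for some type l ∈ {1,…,m}. Let I_n be the number of isolated vertices of type l in G_n (vertices of V^(l) with degree 0). Then I_n / (a_l n^{1−α b_l}) → 1 in probability as n → ∞; in particular G_n has isolated vertices of type l with high probability. -/
/-!
Second moment method. Because the edge probabilities factor over vertex pairs, a vertex of
type `l₀` is isolated with probability `q = ∏_l (1 - c_{l₀ l} p)^{|V^(l)| - [l = l₀]}`, and
`n^{α b_{l₀}} q → 1` since `n log (1 - κ log n / n) = -κ log n + O(log² n / n)`. Hence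
`E I_n ~ a_{l₀} n^{1 - α b_{l₀}} → ∞`. Two distinct vertices of type `l₀` share a single
potential edge, so both are isolated with probability `q² / (1 - p_{l₀ l₀})`; thus
`Var I_n ≤ E I_n + (E I_n)² p_{l₀ l₀} / (1 - p_{l₀ l₀}) = o((E I_n)²)` and Chebyshev's
inequality gives `I_n / E I_n → 1` in probability.
-/

open Finset Filter
open scoped Classical

/-- Probability weight of a specific simple graph `G` on `Fin N` when each edge `{v,w}`
(`v < w`) is present independently with probability `pE v w`. -/
noncomputable def graphWeight {N : ℕ} (pE : Fin N → Fin N → ℝ) (G : SimpleGraph (Fin N)) : ℝ :=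
  ∏ v : Fin N, ∏ w ∈ Finset.univ.filter (fun w => v < w),
    (if G.Adj v w then pE v w else 1 - pE v w)

/-- Probability that the random graph on `Fin N`, whose edges are present independently with
probabilities `pE`, belongs to the set `S`. -/
noncomputable def graphProb {N : ℕ} (pE : Fin N → Fin N → ℝ) (S : Set (SimpleGraph (Fin N))) : ℝ :=
  ∑ G : SimpleGraph (Fin N), (if G ∈ S then graphWeight pE G else 0)

/-- The size of the connected component of `x` in `G`. -/
noncomputable def compSize {N : ℕ} (G : SimpleGraph (Fin N)) (x : Fin N) : ℕ :=
  {y | G.Reachable x y}.ncard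

/-- `C` is a largest connected component of `G`. -/
def IsLargestComponent {N : ℕ} (G : SimpleGraph (Fin N)) (C : Set (Fin N)) : Prop :=
  (∃ x, C = {y | G.Reachable x y}) ∧ ∀ x : Fin N, compSize G x ≤ C.ncard

/-- Edge probability between a vertex of type `k` and one of type `l`:
`c k l * p`, capped at `1` so that it is a probability. -/
noncomputable def edgeP {m : ℕ} (c : Fin m → Fin m → ℝ) (p : ℝ) (k l : Fin m) : ℝ :=
  min (c k l * p) 1

/-- `μ` is the Perron root of `Λ`: a nonnegative real eigenvalue whose modulus dominates
the modulus of every (complex) eigenvalue of `Λ`. -/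
def IsPerronRoot {m : ℕ} (Λ : Matrix (Fin m) (Fin m) ℝ) (μ : ℝ) : Prop :=
  0 ≤ μ ∧ Module.End.HasEigenvalue (Matrix.toLin' Λ) μ ∧
    ∀ z : ℂ, Module.End.HasEigenvalue (Matrix.toLin' (Λ.map (Complex.ofReal))) z →
      ‖z‖ ≤ μ

open Topology

section EdgeProduct

variable {N : ℕ}

abbrev VertexPair (N : ℕ) := {q : Fin N × Fin N // q.1 < q.2}

def VertexPair.Meets (D : Finset (Fin N)) (p : VertexPair N) : Prop :=
  p.1.1 ∈ D ∨ p.1.2 ∈ D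

theorem prod_vertexPair {M : Type*} [CommMonoid M] (f : Fin N → Fin N → M) :
    ∏ p : VertexPair N, f p.1.1 p.1.2 = ∏ v, ∏ w ∈ univ.filter (fun w => v < w), f v w := by
  rw [← prod_subtype (univ.filter fun q : Fin N × Fin N => q.1 < q.2) (fun _ => by simp)
    (fun q => f q.1 q.2), prod_filter, ← univ_product_univ, prod_product]
  simp_rw [prod_filter]

noncomputable def graphEquivPairs (N : ℕ) : SimpleGraph (Fin N) ≃ (VertexPair N → Bool) where
  toFun G p := decide (G.Adj p.1.1 p.1.2)
  invFun f := SimpleGraph.fromRel fun v w => ∃ h : v < w, f ⟨(v, w), h⟩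
  left_inv G := by
    ext v w
    simp only [SimpleGraph.fromRel_adj, decide_eq_true_eq]
    refine ⟨fun ⟨_, h⟩ => h.elim (fun ⟨_, h⟩ => h) (fun ⟨_, h⟩ => h.symm), fun h => ?_⟩
    refine ⟨G.ne_of_adj h, (G.ne_of_adj h).lt_or_gt.imp (fun hlt => ⟨hlt, h⟩)
      (fun hgt => ⟨hgt, h.symm⟩)⟩
  right_inv f := by
    funext ⟨⟨v, w⟩, hvw⟩
    have hwv : ¬ w < v := hvw.not_gt
    simp [SimpleGraph.fromRel_adj, hvw, hvw.ne, hwv]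

theorem graphEquivPairs_apply (G : SimpleGraph (Fin N)) (p : VertexPair N) :
    graphEquivPairs N G p = decide (G.Adj p.1.1 p.1.2) := rfl

theorem graphWeight_eq_prod_vertexPair (pE : Fin N → Fin N → ℝ) (G : SimpleGraph (Fin N)) :
    graphWeight pE G = ∏ p : VertexPair N,
      (if graphEquivPairs N G p then pE p.1.1 p.1.2 else 1 - pE p.1.1 p.1.2) := by
  rw [graphWeight, ← prod_vertexPair (fun v w => if G.Adj v w then pE v w else 1 - pE v w)]
  simp [graphEquivPairs_apply]

theorem sum_prod_graphEquivPairs (φ : VertexPair N → Bool → ℝ) :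
    ∑ G : SimpleGraph (Fin N), ∏ p, φ p (graphEquivPairs N G p) = ∏ p, (φ p true + φ p false) := by
  rw [Equiv.sum_comp (graphEquivPairs N) (fun f => ∏ p, φ p (f p)), ← Fintype.prod_sum φ]
  simp

end EdgeProduct

section Probability

variable {N : ℕ} {pE : Fin N → Fin N → ℝ}

theorem sum_graphWeight (pE : Fin N → Fin N → ℝ) : ∑ G, graphWeight pE G = 1 := by
  simp_rw [graphWeight_eq_prod_vertexPair]
  rw [sum_prod_graphEquivPairs (fun p b => if b then pE p.1.1 p.1.2 else 1 - pE p.1.1 p.1.2)]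
  simp

theorem graphWeight_nonneg (h0 : ∀ v w, 0 ≤ pE v w) (h1 : ∀ v w, pE v w ≤ 1)
    (G : SimpleGraph (Fin N)) : 0 ≤ graphWeight pE G :=
  prod_nonneg fun v _ => prod_nonneg fun w _ => by
    split_ifs
    exacts [h0 v w, sub_nonneg.2 (h1 v w)]

theorem graphProb_nonneg (h0 : ∀ v w, 0 ≤ pE v w) (h1 : ∀ v w, pE v w ≤ 1)
    (S : Set (SimpleGraph (Fin N))) : 0 ≤ graphProb pE S :=
  sum_nonneg fun G _ => by
    split_ifs
    exacts [graphWeight_nonneg h0 h1 G, le_rfl]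

theorem graphProb_mono (h0 : ∀ v w, 0 ≤ pE v w) (h1 : ∀ v w, pE v w ≤ 1)
    {S T : Set (SimpleGraph (Fin N))} (hST : S ⊆ T) : graphProb pE S ≤ graphProb pE T :=
  sum_le_sum fun G _ => by
    by_cases hS : G ∈ S
    · simp [hS, hST hS]
    · split_ifs
      exacts [graphWeight_nonneg h0 h1 G, le_rfl]

theorem graphProb_univ (pE : Fin N → Fin N → ℝ) : graphProb pE Set.univ = 1 := by
  simp [graphProb, sum_graphWeight]

theorem graphProb_le_one (h0 : ∀ v w, 0 ≤ pE v w) (h1 : ∀ v w, pE v w ≤ 1)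
    (S : Set (SimpleGraph (Fin N))) : graphProb pE S ≤ 1 :=
  graphProb_univ pE ▸ graphProb_mono h0 h1 (Set.subset_univ S)

theorem graphProb_compl (pE : Fin N → Fin N → ℝ) (S : Set (SimpleGraph (Fin N))) :
    graphProb pE Sᶜ = 1 - graphProb pE S := by
  rw [← sum_graphWeight pE, graphProb, graphProb, ← sum_sub_distrib]
  refine sum_congr rfl fun G _ => ?_
  by_cases h : G ∈ S <;> simp [h]

end Probability

section PairProducts

variable {N : ℕ} {M : Type*} [CommMonoid M]

theorem prod_vertexPair_meets_singleton (g : Fin N → Fin N → M) (hg : ∀ x y, g x y = g y x)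
    (v : Fin N) :
    ∏ p : VertexPair N, (if p.Meets {v} then g p.1.1 p.1.2 else 1)
      = ∏ w ∈ univ.erase v, g v w := by
  rw [← prod_filter]
  refine prod_bij' (fun p _ => if p.1.1 = v then p.1.2 else p.1.1)
    (fun w hw => if h : v < w then ⟨(v, w), h⟩
      else ⟨(w, v), lt_of_le_of_ne (not_lt.1 h) (ne_of_mem_erase hw)⟩) ?_ ?_ ?_ ?_ ?_
  · rintro ⟨⟨x, y⟩, hxy⟩ hp
    simp only [VertexPair.Meets, mem_filter, mem_univ, mem_singleton, true_and] at hp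
    rcases hp with rfl | rfl <;> simp [hxy.ne', hxy.ne]
  · intro w hw
    split_ifs <;> simp [VertexPair.Meets]
  · rintro ⟨⟨x, y⟩, hxy⟩ hp
    simp only [VertexPair.Meets, mem_filter, mem_univ, mem_singleton, true_and] at hp
    rcases hp with rfl | rfl
    · simp [hxy]
    · simp [hxy.ne, hxy.not_gt]
  · intro w hw
    split_ifs <;> simp_all
  · rintro ⟨⟨x, y⟩, hxy⟩ hp
    simp only [VertexPair.Meets, mem_filter, mem_univ, mem_singleton, true_and] at hp
    rcases hp with rfl | rfl
    · simp
    · simp [hxy.ne, hg x]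

theorem prod_vertexPair_meets_pair_mul (g : Fin N → Fin N → M) (hg : ∀ x y, g x y = g y x)
    {v u : Fin N} (hvu : v ≠ u) :
    (∏ p : VertexPair N, if p.Meets {v, u} then g p.1.1 p.1.2 else 1) * g v u
      = (∏ w ∈ univ.erase v, g v w) * ∏ w ∈ univ.erase u, g u w := by
  wlog hlt : v < u generalizing v u
  · rw [pair_comm, hg, this hvu.symm (hvu.lt_or_gt.resolve_left hlt), mul_comm]
  rw [← prod_vertexPair_meets_singleton g hg v, ← prod_vertexPair_meets_singleton g hg u,
    ← prod_mul_distrib]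
  -- `(v, u)` is the only pair meeting both `{v}` and `{u}`, so its factor is counted twice.
  have hsplit : ∀ p : VertexPair N,
      ((if p.Meets {v} then g p.1.1 p.1.2 else 1) * if p.Meets {u} then g p.1.1 p.1.2 else 1)
        = (if p.Meets {v, u} then g p.1.1 p.1.2 else 1) *
          if p = ⟨(v, u), hlt⟩ then g v u else 1 := by
    rintro ⟨⟨x, y⟩, hxy⟩
    simp only [VertexPair.Meets, mem_insert, mem_singleton, Subtype.mk.injEq, Prod.mk.injEq]
    by_cases hx : x = v <;> by_cases hy : y = u <;> subst_vars <;>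
      simp_all [hxy.ne, hxy.ne', hvu.symm]
    all_goals split_ifs <;> subst_vars <;> first | rfl | exact hg _ _ | omega
  rw [prod_congr rfl fun p _ => hsplit p, prod_mul_distrib, prod_ite_eq']
  simp

end PairProducts

section IsolationProb

variable {N : ℕ}

def allIsolated (D : Finset (Fin N)) : Set (SimpleGraph (Fin N)) :=
  {G | ∀ v ∈ D, ∀ w, ¬ G.Adj v w}

@[simp]
theorem mem_allIsolated {D : Finset (Fin N)} {G : SimpleGraph (Fin N)} :
    G ∈ allIsolated D ↔ ∀ v ∈ D, ∀ w, ¬ G.Adj v w :=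
  Iff.rfl

theorem forall_isolated_iff_graphEquivPairs (D : Finset (Fin N)) (G : SimpleGraph (Fin N)) :
    (∀ v ∈ D, ∀ w, ¬ G.Adj v w) ↔
      ∀ p : VertexPair N, ¬ (p.Meets D ∧ graphEquivPairs N G p) := by
  simp only [graphEquivPairs_apply, decide_eq_true_eq, not_and, Subtype.forall, Prod.forall]
  refine ⟨fun h x y _ hxy hadj => hxy.elim (h x · y hadj) (h y · x hadj.symm),
    fun h v hv w hadj => ?_⟩
  rcases (G.ne_of_adj hadj).lt_or_gt with hlt | hgt
  exacts [h v w hlt (Or.inl hv) hadj, h w v hgt (Or.inr hv) hadj.symm]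

theorem graphProb_forall_isolated (pE : Fin N → Fin N → ℝ) (D : Finset (Fin N)) :
    graphProb pE (allIsolated D)
      = ∏ p : VertexPair N, if p.Meets D then 1 - pE p.1.1 p.1.2 else 1 := by
  rw [graphProb]
  refine (sum_congr rfl fun G _ => ?_).trans (sum_prod_graphEquivPairs fun p b =>
    (if b then pE p.1.1 p.1.2 else 1 - pE p.1.1 p.1.2) *
      if ¬ (p.Meets D ∧ b) then 1 else 0) |>.trans ?_
  · rw [prod_mul_distrib, Fintype.prod_boole, ← graphWeight_eq_prod_vertexPair, mul_ite, mul_one,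
      mul_zero]
    simp only [← forall_isolated_iff_graphEquivPairs, mem_allIsolated]
  · refine prod_congr rfl fun p _ => ?_
    split_ifs <;> simp_all

theorem graphProb_isolated_singleton {pE : Fin N → Fin N → ℝ}
    (hsymm : ∀ v w, pE v w = pE w v) (v : Fin N) :
    graphProb pE (allIsolated {v}) = ∏ w ∈ univ.erase v, (1 - pE v w) := by
  rw [graphProb_forall_isolated,
    prod_vertexPair_meets_singleton (fun x y => 1 - pE x y) (fun x y => by rw [hsymm])]

theorem graphProb_isolated_pair_mul {pE : Fin N → Fin N → ℝ}
    (hsymm : ∀ v w, pE v w = pE w v) {v u : Fin N} (hvu : v ≠ u) :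
    graphProb pE (allIsolated {v, u}) * (1 - pE v u)
      = (∏ w ∈ univ.erase v, (1 - pE v w)) * ∏ w ∈ univ.erase u, (1 - pE u w) := by
  rw [graphProb_forall_isolated,
    prod_vertexPair_meets_pair_mul (fun x y => 1 - pE x y) (fun x y => by rw [hsymm]) hvu]

end IsolationProb

section Moments

variable {N : ℕ} {pE : Fin N → Fin N → ℝ}

noncomputable def graphExpect (pE : Fin N → Fin N → ℝ) (X : SimpleGraph (Fin N) → ℝ) : ℝ :=
  ∑ G, graphWeight pE G * X G

theorem graphExpect_sum_indicator {ι : Type*} (s : Finset ι) (S : ι → Set (SimpleGraph (Fin N)))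
    [∀ i, DecidablePred (· ∈ S i)] :
    graphExpect pE (fun G => ∑ i ∈ s, if G ∈ S i then 1 else 0) = ∑ i ∈ s, graphProb pE (S i) := by
  simp only [graphExpect, graphProb, mul_sum]
  rw [sum_comm]
  refine sum_congr rfl fun i _ => sum_congr rfl fun G _ => ?_
  split_ifs <;> simp

theorem graphProb_le_of_graphExpect (h0 : ∀ v w, 0 ≤ pE v w) (h1 : ∀ v w, pE v w ≤ 1)
    (X : SimpleGraph (Fin N) → ℝ) {μ V t : ℝ} (ht : 0 < t) (hmean : graphExpect pE X = μ)
    (hsq : graphExpect pE (fun G => X G ^ 2) ≤ μ ^ 2 + V) :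
    graphProb pE {G | t ≤ |X G - μ|} ≤ V / t ^ 2 := by
  rw [le_div_iff₀ (by positivity)]
  have hvar : graphExpect pE (fun G => (X G - μ) ^ 2) ≤ V := by
    have hexpand : graphExpect pE (fun G => (X G - μ) ^ 2)
        = graphExpect pE (fun G => X G ^ 2) - 2 * μ * graphExpect pE X
          + μ ^ 2 * ∑ G, graphWeight pE G := by
      simp only [graphExpect, mul_sum, ← sum_sub_distrib, ← sum_add_distrib]
      exact sum_congr rfl fun G _ => by ring
    rw [hexpand, hmean, sum_graphWeight]
    linarith
  refine le_trans ?_ hvar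
  rw [graphProb, sum_mul]
  refine sum_le_sum fun G _ => ?_
  have hw := graphWeight_nonneg h0 h1 G
  split_ifs with hG
  · have : t ^ 2 ≤ (X G - μ) ^ 2 := by
      rw [← sq_abs (X G - μ)]
      exact pow_le_pow_left₀ ht.le hG 2
    nlinarith
  · rw [zero_mul]
    positivity

noncomputable def numIsolatedIn (T : Finset (Fin N)) (G : SimpleGraph (Fin N)) : ℕ :=
  #(T.filter fun v => ∀ w, ¬ G.Adj v w)

theorem numIsolatedIn_eq_sum (T : Finset (Fin N)) (G : SimpleGraph (Fin N)) :
    (numIsolatedIn T G : ℝ)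
      = ∑ v ∈ T, if G ∈ allIsolated {v} then 1 else 0 := by
  rw [numIsolatedIn, card_filter, Nat.cast_sum]
  refine sum_congr rfl fun v _ => ?_
  simp

theorem graphExpect_numIsolatedIn (T : Finset (Fin N)) :
    graphExpect pE (fun G => (numIsolatedIn T G : ℝ))
      = ∑ v ∈ T, graphProb pE (allIsolated {v}) := by
  simp only [numIsolatedIn_eq_sum]
  exact graphExpect_sum_indicator T _

theorem graphExpect_numIsolatedIn_sq (T : Finset (Fin N)) :
    graphExpect pE (fun G => (numIsolatedIn T G : ℝ) ^ 2)
      = ∑ v ∈ T, ∑ u ∈ T, graphProb pE (allIsolated {v, u}) := by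
  have hsq : ∀ G, (numIsolatedIn T G : ℝ) ^ 2 = ∑ q ∈ T ×ˢ T,
      if G ∈ allIsolated {q.1, q.2} then 1 else 0 := by
    intro G
    rw [numIsolatedIn_eq_sum, sq, sum_mul_sum, sum_product]
    simp only [mem_allIsolated, ite_zero_mul_ite_zero, mul_one, mem_insert, mem_singleton,
      forall_eq_or_imp, forall_eq]
  simp only [hsq]
  rw [graphExpect_sum_indicator, sum_product]

theorem graphExpect_numIsolatedIn_sq_le (T : Finset (Fin N))
    {q r : ℝ} (hr : 0 ≤ r)
    (hsingle : ∀ v ∈ T, graphProb pE (allIsolated {v}) = q)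
    (hpair : ∀ v ∈ T, ∀ u ∈ T, v ≠ u →
      graphProb pE (allIsolated {v, u}) ≤ r) :
    graphExpect pE (fun G => (numIsolatedIn T G : ℝ) ^ 2) ≤ #T * q + #T ^ 2 * r := by
  rw [graphExpect_numIsolatedIn_sq]
  have hrow : ∀ v ∈ T, ∑ u ∈ T,
      graphProb pE (allIsolated {v, u}) ≤ q + #T * r := by
    intro v hv
    rw [← add_sum_erase T _ hv, pair_eq_singleton, hsingle v hv]
    gcongr
    calc ∑ u ∈ T.erase v, graphProb pE (allIsolated {v, u})
        ≤ ∑ u ∈ T.erase v, r :=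
          sum_le_sum fun u hu => hpair v hv u (mem_of_mem_erase hu) (ne_of_mem_erase hu).symm
      _ ≤ #T * r := by
          rw [sum_const, nsmul_eq_mul]
          gcongr
          exact erase_subset v T
  calc _ ≤ ∑ _v ∈ T, (q + #T * r) := sum_le_sum hrow
    _ = #T * q + #T ^ 2 * r := by rw [sum_const, nsmul_eq_mul]; ring

end Moments

section TypedModel

variable {m N : ℕ} (c : Fin m → Fin m → ℝ) (p : ℝ) (typ : Fin N → Fin m)

theorem edgeP_nonneg {c : Fin m → Fin m → ℝ} {p : ℝ} (hc : ∀ k l, 0 ≤ c k l) (hp : 0 ≤ p)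
    (k l : Fin m) : 0 ≤ edgeP c p k l :=
  le_min (mul_nonneg (hc k l) hp) zero_le_one

theorem edgeP_le_one (k l : Fin m) : edgeP c p k l ≤ 1 :=
  min_le_right _ _

theorem edgeP_comm {c : Fin m → Fin m → ℝ} (hc : ∀ k l, c k l = c l k) (p : ℝ) (k l : Fin m) :
    edgeP c p k l = edgeP c p l k := by
  rw [edgeP, edgeP, hc]

/-- A vertex of type `k` has `|V^(l)|` potential neighbours of type `l`, one fewer if `l = k`. -/
noncomputable def isolationProb (k : Fin m) : ℝ :=
  ∏ l, (1 - edgeP c p k l) ^ (#(univ.filter fun u => typ u = l) - if k = l then 1 else 0)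

theorem prod_erase_one_sub_edgeP (v : Fin N) :
    ∏ u ∈ univ.erase v, (1 - edgeP c p (typ v) (typ u)) = isolationProb c p typ (typ v) := by
  rw [← prod_fiberwise_of_maps_to (g := typ) (t := univ) (fun _ _ => mem_univ _)]
  refine prod_congr rfl fun l _ => ?_
  rw [prod_congr rfl fun u hu => by rw [(mem_filter.1 hu).2], prod_const, filter_erase]
  congr 1
  split_ifs with h
  · rw [card_erase_of_mem (by simp [h])]
  · rw [erase_eq_of_notMem (by simpa using h), Nat.sub_zero]

variable {c} (hc : ∀ k l, c k l = c l k)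
include hc

theorem graphProb_isolated_singleton_typed (v : Fin N) :
    graphProb (fun v w => edgeP c p (typ v) (typ w)) (allIsolated {v})
      = isolationProb c p typ (typ v) := by
  rw [graphProb_isolated_singleton (fun _ _ => edgeP_comm hc _ _ _), prod_erase_one_sub_edgeP]

theorem graphProb_isolated_pair_typed_mul {v u : Fin N} (hvu : v ≠ u) (htyp : typ u = typ v) :
    graphProb (fun v w => edgeP c p (typ v) (typ w)) (allIsolated {v, u})
        * (1 - edgeP c p (typ v) (typ v))
      = isolationProb c p typ (typ v) ^ 2 := by
  have h := graphProb_isolated_pair_mul (pE := fun v w => edgeP c p (typ v) (typ w))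
    (fun _ _ => edgeP_comm hc p _ _) hvu
  rwa [prod_erase_one_sub_edgeP, prod_erase_one_sub_edgeP, htyp, ← sq] at h

theorem graphExpect_numIsolatedIn_type (k : Fin m) :
    graphExpect (fun v w => edgeP c p (typ v) (typ w))
        (fun G => (numIsolatedIn (univ.filter fun v => typ v = k) G : ℝ))
      = #(univ.filter fun v => typ v = k) * isolationProb c p typ k := by
  rw [graphExpect_numIsolatedIn, sum_congr rfl fun v hv => ?_, sum_const, nsmul_eq_mul]
  rw [graphProb_isolated_singleton_typed p typ hc, (mem_filter.1 hv).2]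

theorem graphExpect_numIsolatedIn_type_sq_le (k : Fin m) (hkk : edgeP c p k k < 1) :
    graphExpect (fun v w => edgeP c p (typ v) (typ w))
        (fun G => (numIsolatedIn (univ.filter fun v => typ v = k) G : ℝ) ^ 2)
      ≤ #(univ.filter fun v => typ v = k) * isolationProb c p typ k
        + (#(univ.filter fun v => typ v = k) * isolationProb c p typ k) ^ 2
          / (1 - edgeP c p k k) := by
  have hpos : 0 < 1 - edgeP c p k k := sub_pos.2 hkk
  refine (graphExpect_numIsolatedIn_sq_le (q := isolationProb c p typ k)
    (r := isolationProb c p typ k ^ 2 / (1 - edgeP c p k k)) _ (by positivity) (fun v hv => ?_)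
    fun v hv u hu hvu => ?_).trans_eq (by ring)
  · rw [graphProb_isolated_singleton_typed p typ hc, (mem_filter.1 hv).2]
  · have htyp : typ u = typ v := by rw [(mem_filter.1 hu).2, (mem_filter.1 hv).2]
    rw [le_div_iff₀ hpos, ← (mem_filter.1 hv).2]
    exact (graphProb_isolated_pair_typed_mul p typ hc hvu htyp).le

end TypedModel

section Asymptotics

open Real

theorem abs_add_log_one_sub_le {x : ℝ} (hx : x ≤ 1 / 2) :
    |x + log (1 - x)| ≤ 2 * x ^ 2 := by
  have hpos : 0 < 1 - x := by linarith
  have hupper : log (1 - x) ≤ -x := by linarith [log_le_sub_one_of_pos hpos]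
  have hlower : 1 - (1 - x)⁻¹ ≤ log (1 - x) := one_sub_inv_le_log_of_pos hpos
  have hinv : (1 - x)⁻¹ ≤ 1 + x + 2 * x ^ 2 := by
    rw [inv_le_iff_one_le_mul₀ hpos]
    nlinarith [sq_nonneg x]
  rw [abs_of_nonpos (by linarith)]
  linarith

theorem tendsto_log_div_natCast : Tendsto (fun n : ℕ => log n / n) atTop (𝓝 0) := by
  simpa [Function.comp_def] using
    (tendsto_pow_log_div_mul_add_atTop 1 0 1 one_ne_zero).comp tendsto_natCast_atTop_atTop

theorem tendsto_log_sq_div_natCast : Tendsto (fun n : ℕ => log n ^ 2 / n) atTop (𝓝 0) := by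
  simpa [Function.comp_def] using
    (tendsto_pow_log_div_mul_add_atTop 1 0 2 one_ne_zero).comp tendsto_natCast_atTop_atTop

theorem tendsto_mul_log_div_natCast (κ : ℝ) :
    Tendsto (fun n : ℕ => κ * log n / n) atTop (𝓝 0) := by
  simpa [mul_div_assoc] using tendsto_log_div_natCast.const_mul κ

theorem tendsto_mul_log_one_sub_add_log (κ : ℝ) :
    Tendsto (fun n : ℕ => n * log (1 - κ * log n / n) + κ * log n) atTop (𝓝 0) := by
  have hbound : Tendsto (fun n : ℕ => 2 * κ ^ 2 * (log n ^ 2 / n)) atTop (𝓝 0) := by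
    simpa using tendsto_log_sq_div_natCast.const_mul (2 * κ ^ 2)
  refine squeeze_zero_norm' ?_ hbound
  filter_upwards [eventually_ge_atTop 1,
    (tendsto_mul_log_div_natCast κ).eventually (eventually_le_nhds one_half_pos)] with n hn hx
  have hnpos : (0 : ℝ) < n := by exact_mod_cast hn
  have hfactor : n * log (1 - κ * log n / n) + κ * log n
      = n * (κ * log n / n + log (1 - κ * log n / n)) := by
    field_simp
    ring
  rw [Real.norm_eq_abs, hfactor, abs_mul, abs_of_pos hnpos]
  calc (n : ℝ) * |κ * log n / n + log (1 - κ * log n / n)|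
      ≤ n * (2 * (κ * log n / n) ^ 2) := by gcongr; exact abs_add_log_one_sub_le hx
    _ = 2 * κ ^ 2 * (log n ^ 2 / n) := by field_simp

theorem tendsto_log_one_sub_mul_log_div_natCast (κ : ℝ) :
    Tendsto (fun n : ℕ => log (1 - κ * log n / n)) atTop (𝓝 0) := by
  have h := ((tendsto_mul_log_div_natCast κ).const_sub 1).log (by norm_num)
  simpa using h

theorem tendsto_rpow_mul_one_sub_pow (κ : ℝ) {a : ℝ} {A : ℕ → ℕ} (hA : ∀ n, (A n : ℝ) = a * n)
    {d : ℕ} (hd : ∀ᶠ n in atTop, d ≤ A n) :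
    Tendsto (fun n : ℕ => (n : ℝ) ^ (a * κ) * (1 - min (κ * log n / n) 1) ^ (A n - d))
      atTop (𝓝 1) := by
  have hexponent := ((tendsto_mul_log_one_sub_add_log κ).const_mul a).sub
    ((tendsto_log_one_sub_mul_log_div_natCast κ).const_mul (d : ℝ))
  rw [mul_zero, mul_zero, sub_zero] at hexponent
  have hlim := (continuous_exp.tendsto 0).comp hexponent
  rw [exp_zero] at hlim
  refine hlim.congr' ?_
  filter_upwards [eventually_ge_atTop 1, hd,
    (tendsto_mul_log_div_natCast κ).eventually (eventually_le_nhds one_half_pos)] with n hn hdn hx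
  have hnpos : (0 : ℝ) < n := by exact_mod_cast hn
  have hpos : 0 < 1 - κ * log n / n := by linarith
  rw [min_eq_left (by linarith), rpow_def_of_pos hnpos, ← exp_log (pow_pos hpos _), log_pow,
    ← exp_add, Nat.cast_sub hdn, hA, Function.comp_apply]
  ring_nf

theorem tendsto_rpow_mul_isolationProb {m : ℕ} {N : ℕ → ℕ} (typ : ∀ n, Fin (N n) → Fin m)
    {a : Fin m → ℝ} (hcard : ∀ n l, (#(univ.filter fun v => typ n v = l) : ℝ) = a l * n)
    (c : Fin m → Fin m → ℝ) (α : ℝ) {k : Fin m} (hak : 0 < a k) :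
    Tendsto (fun n : ℕ =>
        (n : ℝ) ^ (α * ∑ l, a l * c k l) * isolationProb c (α * log n / n) (typ n) k)
      atTop (𝓝 1) := by
  have hfactor : ∀ l, Tendsto (fun n : ℕ => (n : ℝ) ^ (a l * (c k l * α)) *
      (1 - edgeP c (α * log n / n) k l) ^
        (#(univ.filter fun v => typ n v = l) - if k = l then 1 else 0)) atTop (𝓝 1) := by
    intro l
    have hd : ∀ᶠ n in atTop, (if k = l then 1 else 0) ≤ #(univ.filter fun v => typ n v = l) := by
      filter_upwards [eventually_ge_atTop 1] with n hn
      split_ifs with hkl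
      · subst hkl
        have : (0 : ℝ) < #(univ.filter fun v => typ n v = k) := by
          rw [hcard]
          exact mul_pos hak (by exact_mod_cast hn)
        exact_mod_cast this
      · exact Nat.zero_le _
    convert tendsto_rpow_mul_one_sub_pow (c k l * α) (hcard · l) hd using 5 with n
    rw [edgeP]
    ring_nf
  have hprod := tendsto_finsetProd univ fun l _ => hfactor l
  rw [prod_const_one] at hprod
  refine hprod.congr' ?_
  filter_upwards [eventually_ge_atTop 1] with n hn
  rw [prod_mul_distrib, ← rpow_sum_of_pos (by exact_mod_cast hn), isolationProb, mul_sum]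
  congr 2
  exact sum_congr rfl fun l _ => by ring

end Asymptotics

section SecondMomentMethod

variable {N : ℕ → ℕ} {pE : ∀ n, Fin (N n) → Fin (N n) → ℝ}

theorem half_mul_le_abs_sub_of_lt_abs_div_sub_one {x μ B ε : ℝ} (hB : 0 < B)
    (hμ : |μ / B - 1| ≤ ε / 2) (hx : ε < |x / B - 1|) : ε / 2 * B ≤ |x - μ| := by
  rw [div_sub_one hB.ne', abs_div, abs_of_pos hB, lt_div_iff₀ hB] at hx
  rw [div_sub_one hB.ne', abs_div, abs_of_pos hB, div_le_iff₀ hB] at hμ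
  linarith [abs_sub_le x μ B]

theorem tendsto_graphProb_abs_div_sub_one_gt (h0 : ∀ n v w, 0 ≤ pE n v w)
    (h1 : ∀ n v w, pE n v w ≤ 1) (X : ∀ n, SimpleGraph (Fin (N n)) → ℝ) {μ B δ : ℕ → ℝ}
    (hB : Tendsto B atTop atTop) (hμB : Tendsto (fun n => μ n / B n) atTop (𝓝 1))
    (hδ : Tendsto δ atTop (𝓝 1)) (hmean : ∀ n, graphExpect (pE n) (X n) = μ n)
    (hsq : ∀ᶠ n in atTop, graphExpect (pE n) (fun G => X n G ^ 2) ≤ μ n + μ n ^ 2 * δ n)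
    {ε : ℝ} (hε : 0 < ε) :
    Tendsto (fun n => graphProb (pE n) {G | ε < |X n G / B n - 1|}) atTop (𝓝 0) := by
  have hbound : Tendsto (fun n => 4 / ε ^ 2 * (μ n / B n * (B n)⁻¹ + (μ n / B n) ^ 2 * (δ n - 1)))
      atTop (𝓝 0) := by
    simpa using ((hμB.mul hB.inv_tendsto_atTop).add ((hμB.pow 2).mul (hδ.sub_const 1))).const_mul (4 / ε ^ 2)
  refine squeeze_zero' (Eventually.of_forall fun n => graphProb_nonneg (h0 n) (h1 n) _) ?_ hbound
  filter_upwards [hB.eventually_gt_atTop 0, hsq,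
    hμB.eventually (Metric.closedBall_mem_nhds 1 (half_pos hε))] with n hBn hsqn hμn
  have hsub : {G | ε < |X n G / B n - 1|} ⊆ {G | ε / 2 * B n ≤ |X n G - μ n|} :=
    fun G hG => half_mul_le_abs_sub_of_lt_abs_div_sub_one hBn hμn hG
  calc graphProb (pE n) {G | ε < |X n G / B n - 1|}
      ≤ (μ n + μ n ^ 2 * (δ n - 1)) / (ε / 2 * B n) ^ 2 :=
        (graphProb_mono (h0 n) (h1 n) hsub).trans
          (graphProb_le_of_graphExpect (h0 n) (h1 n) _ (by positivity) (hmean n)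
            (hsqn.trans_eq (by ring)))
    _ = 4 / ε ^ 2 * (μ n / B n * (B n)⁻¹ + (μ n / B n) ^ 2 * (δ n - 1)) := by
        field_simp
        ring

theorem tendsto_graphProb_pos_of_tendsto_abs_div_sub_one (h0 : ∀ n v w, 0 ≤ pE n v w)
    (h1 : ∀ n v w, pE n v w ≤ 1) (X : ∀ n, SimpleGraph (Fin (N n)) → ℝ) {B : ℕ → ℝ}
    (hB : ∀ᶠ n in atTop, 0 < B n)
    (hX : Tendsto (fun n => graphProb (pE n) {G | 1 / 2 < |X n G / B n - 1|}) atTop (𝓝 0)) :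
    Tendsto (fun n => graphProb (pE n) {G | 0 < X n G}) atTop (𝓝 1) := by
  have hlower : Tendsto (fun n => graphProb (pE n) {G | 1 / 2 < |X n G / B n - 1|}ᶜ)
      atTop (𝓝 1) := by
    simpa [graphProb_compl] using hX.const_sub 1
  refine tendsto_of_tendsto_of_tendsto_of_le_of_le' hlower tendsto_const_nhds ?_
    (Eventually.of_forall fun n => graphProb_le_one (h0 n) (h1 n) _)
  filter_upwards [hB] with n hBn
  refine graphProb_mono (h0 n) (h1 n) fun G hG => ?_
  simp only [Set.mem_compl_iff, Set.mem_ofPred_eq, not_lt, abs_le] at hG ⊢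
  have : 1 / 2 ≤ X n G / B n := by linarith [hG.1]
  rw [le_div_iff₀ hBn] at this
  linarith

end SecondMomentMethod

section IsolatedVertices

open Real

theorem tendsto_edgeP_mul_log_div_natCast {m : ℕ} (c : Fin m → Fin m → ℝ) (α : ℝ) (k l : Fin m) :
    Tendsto (fun n : ℕ => edgeP c (α * log n / n) k l) atTop (𝓝 0) := by
  have h := ((tendsto_mul_log_div_natCast α).const_mul (c k l)).min
    (tendsto_const_nhds (x := (1 : ℝ)))
  simpa [edgeP, mul_div_assoc] using h

theorem tendsto_graphProb_abs_numIsolatedIn_div_sub_one_gt {m : ℕ} {a : Fin m → ℝ}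
    {c : Fin m → Fin m → ℝ} (hcsymm : ∀ k l, c k l = c l k) (hcnn : ∀ k l, 0 ≤ c k l)
    {α : ℝ} (hα : 0 < α) {k : Fin m} (hak : 0 < a k) (hsub : α * ∑ l, a l * c k l < 1)
    {N : ℕ → ℕ} (typ : ∀ n, Fin (N n) → Fin m)
    (hcard : ∀ n l, (#(univ.filter fun v => typ n v = l) : ℝ) = a l * n) {ε : ℝ} (hε : 0 < ε) :
    Tendsto (fun n : ℕ => graphProb (fun v w => edgeP c (α * log n / n) (typ n v) (typ n w))
      {G | ε < |(numIsolatedIn (univ.filter fun v => typ n v = k) G : ℝ) /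
        (a k * (n : ℝ) ^ (1 - α * ∑ l, a l * c k l)) - 1|}) atTop (𝓝 0) := by
  set b := ∑ l, a l * c k l
  have hB : Tendsto (fun n : ℕ => a k * (n : ℝ) ^ (1 - α * b)) atTop atTop :=
    ((tendsto_rpow_atTop (by linarith)).comp tendsto_natCast_atTop_atTop).const_mul_atTop hak
  have hμB : Tendsto (fun n : ℕ => a k * n * isolationProb c (α * log n / n) (typ n) k /
      (a k * (n : ℝ) ^ (1 - α * b))) atTop (𝓝 1) := by
    refine (tendsto_rpow_mul_isolationProb typ hcard c α hak).congr' ?_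
    filter_upwards [eventually_gt_atTop 0] with n hn
    have hnpos : (0 : ℝ) < n := by exact_mod_cast hn
    rw [rpow_sub hnpos, rpow_one]
    field_simp [hak.ne']
    exact mul_comm _ _
  have he := tendsto_edgeP_mul_log_div_natCast c α k k
  have hδ : Tendsto (fun n : ℕ => (1 - edgeP c (α * log n / n) k k)⁻¹) atTop (𝓝 1) := by
    simpa using (he.const_sub (1 : ℝ)).inv₀ (by norm_num)
  have hmean : ∀ n : ℕ, graphExpect (fun v w => edgeP c (α * log n / n) (typ n v) (typ n w))
      (fun G => (numIsolatedIn (univ.filter fun v => typ n v = k) G : ℝ))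
        = a k * n * isolationProb c (α * log n / n) (typ n) k := fun n => by
    rw [graphExpect_numIsolatedIn_type _ _ hcsymm, hcard]
  have hsq : ∀ᶠ n : ℕ in atTop,
      graphExpect (fun v w => edgeP c (α * log n / n) (typ n v) (typ n w))
        (fun G => (numIsolatedIn (univ.filter fun v => typ n v = k) G : ℝ) ^ 2)
      ≤ a k * n * isolationProb c (α * log n / n) (typ n) k +
        (a k * n * isolationProb c (α * log n / n) (typ n) k) ^ 2 *
          (1 - edgeP c (α * log n / n) k k)⁻¹ := by
    filter_upwards [he.eventually (gt_mem_nhds one_pos)] with n hn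
    refine (graphExpect_numIsolatedIn_type_sq_le _ (typ n) hcsymm k hn).trans_eq ?_
    rw [hcard]
    ring
  exact tendsto_graphProb_abs_div_sub_one_gt
    (fun n _ _ => edgeP_nonneg hcnn (by positivity) _ _) (fun n _ _ => edgeP_le_one _ _ _ _)
    _ hB hμB hδ hmean hsq hε

end IsolatedVertices

theorem isolated_vertices_subcritical_general
    (m : ℕ) (a : Fin m → ℝ) (ha : ∀ k, 0 < a k)
    (c : Fin m → Fin m → ℝ) (hcsymm : ∀ k l, c k l = c l k) (hcnn : ∀ k l, 0 ≤ c k l)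
    (α : ℝ) (hα : 0 < α)
    (l₀ : Fin m) (hsub : α * (∑ l, a l * c l₀ l) < 1)
    (N : ℕ → ℕ) (typ : ∀ n, Fin (N n) → Fin m)
    (hcard : ∀ n k, (((Finset.univ.filter fun v => typ n v = k)).card : ℝ) = a k * n) :
    (∀ ε > (0 : ℝ),
      Tendsto (fun n : ℕ =>
          graphProb (fun v w => edgeP c (α * Real.log n / n) (typ n v) (typ n w))
            {G | ε < |(((Finset.univ.filter fun v =>
                  typ n v = l₀ ∧ ∀ w, ¬ G.Adj v w)).card : ℝ) /
                (a l₀ * (n : ℝ) ^ (1 - α * (∑ l, a l * c l₀ l))) - 1|})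
        atTop (nhds 0)) ∧
    Tendsto (fun n : ℕ =>
        graphProb (fun v w => edgeP c (α * Real.log n / n) (typ n v) (typ n w))
          {G | ∃ v, typ n v = l₀ ∧ ∀ w, ¬ G.Adj v w})
      atTop (nhds 1) := by
  have h0 : ∀ n (v w : Fin (N n)), 0 ≤ edgeP c (α * Real.log n / n) (typ n v) (typ n w) :=
    fun n _ _ => edgeP_nonneg hcnn (by positivity) _ _
  have h1 : ∀ n (v w : Fin (N n)), edgeP c (α * Real.log n / n) (typ n v) (typ n w) ≤ 1 :=
    fun n _ _ => edgeP_le_one _ _ _ _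
  have hcount : ∀ n (G : SimpleGraph (Fin (N n))),
      numIsolatedIn (univ.filter fun v => typ n v = l₀) G
        = #(univ.filter fun v => typ n v = l₀ ∧ ∀ w, ¬ G.Adj v w) := fun n G =>
    congrArg card (filter_filter _ _ _)
  have hconc := fun ε (hε : 0 < ε) =>
    tendsto_graphProb_abs_numIsolatedIn_div_sub_one_gt hcsymm hcnn hα (ha l₀) hsub typ hcard hε
  simp only [hcount] at hconc
  refine ⟨hconc, ?_⟩
  convert tendsto_graphProb_pos_of_tendsto_abs_div_sub_one h0 h1 _
    ((eventually_gt_atTop 0).mono fun n hn =>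
      mul_pos (ha l₀) (Real.rpow_pos_of_pos (by exact_mod_cast hn) _))
    (hconc (1 / 2) one_half_pos) using 3 with n
  ext G
  simp [Finset.card_pos, filter_nonempty_iff]

/-- For `p(n) = α log n / n` with `α b_l < 1` for some type `l`, the number
`I_n` of isolated vertices of type `l` satisfies `I_n / (a_l n^{1 - α b_l}) → 1` in
probability; in particular there are isolated vertices of type `l` w.h.p. -/
theorem isolated_vertices_subcritical
    (m : ℕ) (hm : 0 < m) (a : Fin m → ℝ) (ha : ∀ k, 0 < a k)
    (c : Fin m → Fin m → ℝ) (hcsymm : ∀ k l, c k l = c l k) (hcnn : ∀ k l, 0 ≤ c k l)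
    (hirr : (SimpleGraph.fromRel (fun k l => 0 < c k l)).Connected)
    (α : ℝ) (hα : 0 < α)
    (l₀ : Fin m) (hsub : α * (∑ l, a l * c l₀ l) < 1)
    (N : ℕ → ℕ) (typ : ∀ n, Fin (N n) → Fin m)
    (hcard : ∀ n k, (((Finset.univ.filter fun v => typ n v = k)).card : ℝ) = a k * n) :
    (∀ ε > (0 : ℝ),
      Tendsto (fun n : ℕ =>
          graphProb (fun v w => edgeP c (α * Real.log n / n) (typ n v) (typ n w))
            {G | ε < |(((Finset.univ.filter fun v =>
                  typ n v = l₀ ∧ ∀ w, ¬ G.Adj v w)).card : ℝ) /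
                (a l₀ * (n : ℝ) ^ (1 - α * (∑ l, a l * c l₀ l))) - 1|})
        atTop (nhds 0)) ∧
    Tendsto (fun n : ℕ =>
        graphProb (fun v w => edgeP c (α * Real.log n / n) (typ n v) (typ n w))
          {G | ∃ v, typ n v = l₀ ∧ ∀ w, ¬ G.Adj v w})
      atTop (nhds 1) :=
  isolated_vertices_subcritical_general m a ha c hcsymm hcnn α hα l₀ hsub N typ hcard
end
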